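/- In the setting of the eigenvalue perturbation lemma (ε3 < 1/2), Â has unit-norm right eigenvectors ξ̂_1,...,ξ̂_k satisfying ‖ξ̂_{τ(i)} − ξ_i‖₂ ≤ 4(k−1)·‖R^{-1}‖₂·ε3 for all i (up to a choice of sign for each ξ̂_i), where ξ_i are the unit-norm eigenvectors of A. -/

import Mathlib

/-- Euclidean norm of a vector in `ℝ^n`. -/
noncomputable def vnorm {n : ℕ} (v : Fin n → ℝ) : ℝ := Real.sqrt (∑ i, v i ^ 2)

/-- The `j`-th largest singular value (1-indexed) of a real `m × n` matrix, via the
Courant–Fischer max-min characterization.  In particular `sval A 1` is the spectral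
norm `‖A‖₂` and `sval A k` is `σ_k(A)`. -/
noncomputable def sval {m n : ℕ} (A : Matrix (Fin m) (Fin n) ℝ) (j : ℕ) : ℝ :=
  sSup {c : ℝ | 0 ≤ c ∧ ∃ W : Submodule ℝ (Fin n → ℝ), Module.finrank ℝ W = j ∧
    ∀ v ∈ W, c * vnorm v ≤ vnorm (A.mulVec v)}

/-- `U` is an `m × k` matrix of orthonormal columns spanning a top-`k` left singular
subspace of `A`: its columns are orthonormal eigenvectors of `A Aᵀ` whose eigenvalues
are (at least) `σ_k(A)²`, i.e. belong to the `k` largest. -/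
def IsTopSingular {m n k : ℕ} (A : Matrix (Fin m) (Fin n) ℝ)
    (U : Matrix (Fin m) (Fin k) ℝ) : Prop :=
  U.transpose * U = 1 ∧ ∃ D : Fin k → ℝ,
    A * A.transpose * U = U * Matrix.diagonal D ∧ ∀ j, sval A k ^ 2 ≤ D j

/-!
Conjugating by `R` turns `Â` into `B = R⁻¹ Â R = diag λ + E` with
`‖E‖ ≤ ‖R⁻¹‖ ‖Â - A‖ ‖R‖ = ε₃ γ =: d < γ / 2`, because `‖R⁻¹‖ = 1 / σ_k(R)`.
By Bauer–Fike, `det (diag λ + s E - t)` does not vanish for `s ∈ [0, 1]` as long as `t` is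
farther than `d` from every `λ_j`; along this homotopy the determinant at `t = λ_i ± γ / 2`
keeps the sign of `∏ (λ_j - t)`, which differs at the two points, so the intermediate value
theorem yields an eigenvalue `μ_i` of `Â` within `d` of `λ_i`. For an eigenvector `c` of `B`,
`(μ_i - λ_j) c_j = (E c)_j` gives `|c_j| ≤ 2 ε₃ ‖c‖ ≤ 2 ε₃ ‖R⁻¹‖` for `j ≠ i` when `‖R c‖ = 1`.
Hence the unit eigenvector `ξ̂ = R c` is within `β = 2 (k - 1) ‖R⁻¹‖ ε₃` of `c_i ξ_i`; comparing
norms, `|c_i|` is within `β` of `1`, and the sign of `c_i` is the sign `s` in the conclusion.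
-/

open Matrix

section Vnorm

variable {n : ℕ}

lemma vnorm_eq_norm (v : Fin n → ℝ) :
    vnorm v = ‖(WithLp.toLp 2 v : EuclideanSpace ℝ (Fin n))‖ := by
  simp [vnorm, EuclideanSpace.norm_eq]

lemma vnorm_nonneg (v : Fin n → ℝ) : 0 ≤ vnorm v := Real.sqrt_nonneg _

lemma vnorm_pos {v : Fin n → ℝ} (hv : v ≠ 0) : 0 < vnorm v := by
  rw [vnorm_eq_norm, norm_pos_iff]
  exact fun h => hv (congrArg WithLp.ofLp h)

lemma vnorm_smul (a : ℝ) (v : Fin n → ℝ) : vnorm (a • v) = |a| * vnorm v := by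
  simp only [vnorm_eq_norm, WithLp.toLp_smul, norm_smul, Real.norm_eq_abs]

lemma abs_apply_le_vnorm (v : Fin n → ℝ) (i : Fin n) : |v i| ≤ vnorm v := by
  rw [vnorm_eq_norm, ← Real.norm_eq_abs]
  exact PiLp.norm_apply_le (WithLp.toLp 2 v) i

end Vnorm

section Sval

variable {m n : ℕ}

open scoped Matrix.Norms.L2Operator in
lemma exists_vnorm_mulVec_le (M : Matrix (Fin m) (Fin n) ℝ) :
    ∃ C, ∀ v, vnorm (M *ᵥ v) ≤ C * vnorm v :=
  ⟨‖M‖, fun v => by simp only [vnorm_eq_norm]; exact l2_opNorm_mulVec M (WithLp.toLp 2 v)⟩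

lemma le_sval {M : Matrix (Fin m) (Fin n) ℝ} {j : ℕ} (hj : 0 < j) {c : ℝ} (hc : 0 ≤ c)
    (W : Submodule ℝ (Fin n → ℝ)) (hW : Module.finrank ℝ W = j)
    (hcW : ∀ v ∈ W, c * vnorm v ≤ vnorm (M *ᵥ v)) : c ≤ sval M j := by
  refine le_csSup ?_ ⟨hc, W, hW, hcW⟩
  obtain ⟨C, hC⟩ := exists_vnorm_mulVec_le M
  refine ⟨C, fun c' ⟨_, W', hW', hcW'⟩ => ?_⟩
  obtain ⟨w, hw⟩ := Module.finrank_pos_iff_exists_ne_zero.1 (hW' ▸ hj : 0 < Module.finrank ℝ W')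
  have hw0 : (w : Fin n → ℝ) ≠ 0 := by simpa using hw
  exact le_of_mul_le_mul_right ((hcW' w w.2).trans (hC w)) (vnorm_pos hw0)

lemma sval_le {M : Matrix (Fin m) (Fin n) ℝ} {j : ℕ} {a : ℝ} (ha : 0 ≤ a)
    (h : ∀ c, 0 ≤ c → ∀ W : Submodule ℝ (Fin n → ℝ), Module.finrank ℝ W = j →
      (∀ v ∈ W, c * vnorm v ≤ vnorm (M *ᵥ v)) → c ≤ a) : sval M j ≤ a :=
  Real.sSup_le (fun _ ⟨hc, W, hW, hcW⟩ => h _ hc W hW hcW) ha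

lemma sval_nonneg (M : Matrix (Fin m) (Fin n) ℝ) (j : ℕ) : 0 ≤ sval M j :=
  Real.sSup_nonneg fun _ hc => hc.1

lemma vnorm_mulVec_le_sval_one (M : Matrix (Fin m) (Fin n) ℝ) (v : Fin n → ℝ) :
    vnorm (M *ᵥ v) ≤ sval M 1 * vnorm v := by
  rcases eq_or_ne v 0 with rfl | hv
  · simp [vnorm]
  have hv' := vnorm_pos hv
  rw [← div_le_iff₀ hv']
  refine le_sval one_pos (div_nonneg (vnorm_nonneg _) hv'.le) (Submodule.span ℝ {v})
    (finrank_span_singleton hv) fun w hw => ?_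
  obtain ⟨a, rfl⟩ := Submodule.mem_span_singleton.1 hw
  rw [mulVec_smul, vnorm_smul, vnorm_smul]
  exact (by field_simp : _ = _).le

lemma sval_mul_vnorm_le_vnorm_mulVec (M : Matrix (Fin m) (Fin n) ℝ) (v : Fin n → ℝ) :
    sval M n * vnorm v ≤ vnorm (M *ᵥ v) := by
  rcases eq_or_ne v 0 with rfl | hv
  · simp [vnorm]
  have hv' := vnorm_pos hv
  rw [← le_div_iff₀ hv']
  refine sval_le (div_nonneg (vnorm_nonneg _) hv'.le) fun c _ W hW hcW => ?_
  have hWtop : W = ⊤ := Submodule.eq_top_of_finrank_eq (by rw [hW, Module.finrank_fin_fun])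
  rw [le_div_iff₀ hv']
  exact hcW v (hWtop ▸ Submodule.mem_top)

lemma sval_inv_one_eq_inv_sval {k : ℕ} (hk : 0 < k) {R : Matrix (Fin k) (Fin k) ℝ}
    (hR : IsUnit R) : sval R⁻¹ 1 = (sval R k)⁻¹ := by
  have hdet := (isUnit_iff_isUnit_det R).1 hR
  set N := sval R⁻¹ 1
  set σ := sval R k
  have hN_le : ∀ v, vnorm v ≤ N * vnorm (R *ᵥ v) := fun v => by
    simpa [mulVec_mulVec, nonsing_inv_mul R hdet] using vnorm_mulVec_le_sval_one R⁻¹ (R *ᵥ v)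
  have hσ_le : ∀ v, σ * vnorm (R⁻¹ *ᵥ v) ≤ vnorm v := fun v => by
    simpa [mulVec_mulVec, mul_nonsing_inv R hdet] using
      sval_mul_vnorm_le_vnorm_mulVec R (R⁻¹ *ᵥ v)
  have hN : 0 < N := by
    have hv : (Pi.single ⟨0, hk⟩ 1 : Fin k → ℝ) ≠ 0 := by simp
    exact pos_of_mul_pos_left ((vnorm_pos hv).trans_le (hN_le _)) (vnorm_nonneg _)
  have hN_inv : N⁻¹ ≤ σ := le_sval hk (inv_nonneg.2 hN.le) ⊤ (by simp) fun v _ => by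
    rw [inv_mul_le_iff₀ hN]
    exact hN_le v
  have hσ : 0 < σ := (inv_pos.2 hN).trans_le hN_inv
  refine le_antisymm (sval_le (inv_nonneg.2 hσ.le) fun c _ W hW hcW => ?_)
    ((inv_le_comm₀ hN hσ).1 hN_inv)
  obtain ⟨w, hw⟩ := Module.finrank_pos_iff_exists_ne_zero.1 (hW ▸ one_pos : 0 < Module.finrank ℝ W)
  have hw' := vnorm_pos (by simpa using hw : (w : Fin k → ℝ) ≠ 0)
  have hσc : σ * c * vnorm (w : Fin k → ℝ) ≤ 1 * vnorm (w : Fin k → ℝ) := by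
    rw [mul_assoc, one_mul]
    exact (mul_le_mul_of_nonneg_left (hcW w w.2) hσ.le).trans (hσ_le w)
  rw [← one_div, le_div_iff₀ hσ, mul_comm]
  exact le_of_mul_le_mul_right hσc hw'

end Sval

lemma exists_mem_Icc_eq_zero_of_mul_nonpos {f : ℝ → ℝ} {a b : ℝ} (hab : a ≤ b)
    (hf : ContinuousOn f (Set.Icc a b)) (h : f a * f b ≤ 0) : ∃ x ∈ Set.Icc a b, f x = 0 := by
  rcases mul_nonpos_iff.1 h with ⟨ha, hb⟩ | ⟨ha, hb⟩
  · exact intermediate_value_Icc' hab hf ⟨hb, ha⟩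
  · exact intermediate_value_Icc hab hf ⟨ha, hb⟩

section NearlyDiagonal

variable {k : ℕ} {lam : Fin k → ℝ} {B : Matrix (Fin k) (Fin k) ℝ} {d : ℝ}

lemma vnorm_sq (v : Fin k → ℝ) : vnorm v ^ 2 = ∑ i, v i ^ 2 :=
  Real.sq_sqrt (Finset.sum_nonneg fun i _ => sq_nonneg (v i))

lemma mul_vnorm_lt_vnorm_mul {a y : Fin k → ℝ} (hd : 0 ≤ d) (ha : ∀ j, d < |a j|)
    (hy : y ≠ 0) : d * vnorm y < vnorm (a * y) := by
  have hsq : ∀ j, d ^ 2 < a j ^ 2 := fun j => sq_lt_sq.2 (by rw [abs_of_nonneg hd]; exact ha j)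
  obtain ⟨j, hj⟩ := Function.ne_iff.1 hy
  refine lt_of_pow_lt_pow_left₀ 2 (vnorm_nonneg _) ?_
  rw [mul_pow, vnorm_sq, vnorm_sq, Finset.mul_sum]
  refine Finset.sum_lt_sum (fun i _ => ?_) ⟨j, Finset.mem_univ j, ?_⟩
  · rw [Pi.mul_apply, mul_pow]
    exact mul_le_mul_of_nonneg_right (hsq i).le (sq_nonneg _)
  · rw [Pi.mul_apply, mul_pow]
    exact mul_lt_mul_of_pos_right (hsq j) (pow_pos (abs_pos.2 hj) 2 |>.trans_eq (sq_abs _))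

lemma sub_diagonal_mulVec_of_mulVec_eq_smul {c : Fin k → ℝ} {μ : ℝ} (hc : B *ᵥ c = μ • c) :
    (B - diagonal lam) *ᵥ c = (fun j => μ - lam j) * c := by
  ext j
  simp [sub_mulVec, hc, mulVec_diagonal, sub_mul]

lemma exists_mulVec_eq_smul_of_det_eq_zero {μ : ℝ} (h : (B - μ • 1).det = 0) :
    ∃ c ≠ 0, B *ᵥ c = μ • c := by
  obtain ⟨c, hc, hBc⟩ := exists_mulVec_eq_zero_iff.2 h
  refine ⟨c, hc, ?_⟩
  rwa [sub_mulVec, smul_mulVec, one_mulVec, sub_eq_zero] at hBc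

lemma det_sub_smul_one_ne_zero (hd : 0 ≤ d)
    (hB : ∀ y, vnorm ((B - diagonal lam) *ᵥ y) ≤ d * vnorm y) {t : ℝ}
    (ht : ∀ j, d < |lam j - t|) : (B - t • 1).det ≠ 0 := by
  intro h
  obtain ⟨y, hy, hBy⟩ := exists_mulVec_eq_smul_of_det_eq_zero h
  have hlt := mul_vnorm_lt_vnorm_mul (a := fun j => t - lam j) hd
    (fun j => by rw [abs_sub_comm]; exact ht j) hy
  rw [← sub_diagonal_mulVec_of_mulVec_eq_smul hBy] at hlt
  exact (hB y).not_gt hlt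

lemma prod_sub_mul_det_sub_smul_one_pos (hd : 0 ≤ d)
    (hB : ∀ y, vnorm ((B - diagonal lam) *ᵥ y) ≤ d * vnorm y) {t : ℝ}
    (ht : ∀ j, d < |lam j - t|) : 0 < (∏ j, (lam j - t)) * (B - t • 1).det := by
  set f : ℝ → ℝ := fun s => (diagonal lam + s • (B - diagonal lam) - t • 1).det
  have hf : Continuous f := by fun_prop
  have hf0 : f 0 = ∏ j, (lam j - t) := by
    simp [f, smul_one_eq_diagonal, diagonal_sub, det_diagonal]
  have hf1 : f 1 = (B - t • 1).det := by simp [f]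
  have hf_ne : ∀ s ∈ Set.Icc (0 : ℝ) 1, f s ≠ 0 := by
    refine fun s hs => det_sub_smul_one_ne_zero hd (fun y => ?_) ht
    rw [add_sub_cancel_left, smul_mulVec, vnorm_smul, abs_of_nonneg hs.1]
    calc s * vnorm ((B - diagonal lam) *ᵥ y) ≤ 1 * (d * vnorm y) :=
          mul_le_mul hs.2 (hB y) (vnorm_nonneg _) zero_le_one
      _ = d * vnorm y := one_mul _
  rw [← hf0, ← hf1]
  by_contra! h
  obtain ⟨s, hs, hfs⟩ := exists_mem_Icc_eq_zero_of_mul_nonpos zero_le_one hf.continuousOn h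
  exact hf_ne s hs hfs

variable {γ : ℝ} {i : Fin k}

lemma lt_abs_sub_of_isolated (hgap : ∀ j ≠ i, γ ≤ |lam j - lam i|) (hdγ : d < γ / 2) (t : ℝ)
    (ht : |t - lam i| ≤ γ / 2) (hti : d < |lam i - t|) (j : Fin k) : d < |lam j - t| := by
  rcases eq_or_ne j i with rfl | hj
  · exact hti
  · linarith [hgap j hj, abs_sub_le (lam j) t (lam i)]

lemma prod_sub_mul_prod_sub_neg (hγ : 0 < γ) (hgap : ∀ j ≠ i, γ ≤ |lam j - lam i|) :
    (∏ j, (lam j - (lam i - γ / 2))) * ∏ j, (lam j - (lam i + γ / 2)) < 0 := by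
  rw [← Finset.prod_mul_distrib, ← Finset.mul_prod_erase _ _ (Finset.mem_univ i)]
  refine mul_neg_of_neg_of_pos (by nlinarith) (Finset.prod_pos fun j hj => ?_)
  have hγj := hgap j (Finset.ne_of_mem_erase hj)
  nlinarith [abs_mul_abs_self (lam j - lam i), abs_nonneg (lam j - lam i)]

lemma exists_eigenvector_near (hd : 0 ≤ d) (hdγ : d < γ / 2)
    (hgap : ∀ j ≠ i, γ ≤ |lam j - lam i|)
    (hB : ∀ y, vnorm ((B - diagonal lam) *ᵥ y) ≤ d * vnorm y) :
    ∃ μ, ∃ c ≠ 0, |μ - lam i| ≤ d ∧ B *ᵥ c = μ • c := by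
  have hfar := lt_abs_sub_of_isolated hgap hdγ
  have ha := prod_sub_mul_det_sub_smul_one_pos hd hB
    (hfar (lam i - γ / 2) (by rw [sub_sub_cancel_left, abs_neg, abs_of_pos (by linarith)])
      (by rw [sub_sub_cancel, abs_of_pos (by linarith)]; linarith))
  have hb := prod_sub_mul_det_sub_smul_one_pos hd hB
    (hfar (lam i + γ / 2) (by rw [add_sub_cancel_left, abs_of_pos (by linarith)])
      (by rw [sub_add_cancel_left, abs_neg, abs_of_pos (by linarith)]; linarith))
  have hab := prod_sub_mul_prod_sub_neg (by linarith) hgap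
  obtain ⟨μ, hμ, hroot⟩ := exists_mem_Icc_eq_zero_of_mul_nonpos
    (f := fun t => (B - t • 1).det) (a := lam i - γ / 2) (b := lam i + γ / 2)
    (by linarith) (by fun_prop) (by nlinarith [mul_pos ha hb])
  obtain ⟨c, hc, hBc⟩ := exists_mulVec_eq_smul_of_det_eq_zero hroot
  refine ⟨μ, c, hc, ?_, hBc⟩
  by_contra! hμi
  refine det_sub_smul_one_ne_zero hd hB (hfar μ (abs_le.2 ⟨?_, ?_⟩) ?_) hroot
  · linarith [hμ.1]
  · linarith [hμ.2]
  · rwa [abs_sub_comm]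

lemma abs_apply_le_of_isolated (hdγ : d < γ / 2) (hgap : ∀ j ≠ i, γ ≤ |lam j - lam i|)
    (hB : ∀ y, vnorm ((B - diagonal lam) *ᵥ y) ≤ d * vnorm y) {μ : ℝ} {c : Fin k → ℝ}
    (hμ : |μ - lam i| ≤ d) (hc : B *ᵥ c = μ • c) {j : Fin k} (hj : j ≠ i) :
    |c j| ≤ 2 * (d / γ) * vnorm c := by
  have hγ : 0 < γ := by linarith [(abs_nonneg _).trans hμ]
  have hμj : γ / 2 ≤ |μ - lam j| := by
    linarith [hgap j hj, abs_sub_le (lam j) μ (lam i), abs_sub_comm (lam j) μ]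
  have hcj : |μ - lam j| * |c j| ≤ d * vnorm c := by
    rw [← abs_mul]
    have := congrFun (sub_diagonal_mulVec_of_mulVec_eq_smul (lam := lam) hc) j
    rw [Pi.mul_apply] at this
    exact this ▸ (abs_apply_le_vnorm _ j).trans (hB c)
  rw [mul_div_assoc', div_mul_eq_mul_div, le_div_iff₀ hγ]
  nlinarith [abs_nonneg (c j)]

end NearlyDiagonal

section Conjugation

variable {m n p q : ℕ}

lemma vnorm_mul_mul_mulVec_le (P : Matrix (Fin m) (Fin n) ℝ) (Q : Matrix (Fin n) (Fin p) ℝ)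
    (S : Matrix (Fin p) (Fin q) ℝ) (y : Fin q → ℝ) :
    vnorm ((P * Q * S) *ᵥ y) ≤ sval P 1 * sval Q 1 * sval S 1 * vnorm y := by
  rw [← mulVec_mulVec, ← mulVec_mulVec, mul_assoc, mul_assoc]
  refine (vnorm_mulVec_le_sval_one P _).trans (mul_le_mul_of_nonneg_left ?_ (sval_nonneg P 1))
  refine (vnorm_mulVec_le_sval_one Q _).trans (mul_le_mul_of_nonneg_left ?_ (sval_nonneg Q 1))
  exact vnorm_mulVec_le_sval_one S y

variable {k : ℕ} {R A Ah : Matrix (Fin k) (Fin k) ℝ}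

lemma inv_mul_mul_sub_diagonal_eq {lam : Fin k → ℝ} (hR : IsUnit R)
    (hA : A = R * diagonal lam * R⁻¹) : R⁻¹ * Ah * R - diagonal lam = R⁻¹ * (Ah - A) * R := by
  have hdet := (isUnit_iff_isUnit_det R).1 hR
  simp [hA, Matrix.mul_sub, Matrix.sub_mul, Matrix.mul_assoc, nonsing_inv_mul R hdet,
    nonsing_inv_mul_cancel_left _ _ hdet]

lemma mulVec_mulVec_eq_smul_of_conj (hR : IsUnit R) {c : Fin k → ℝ} {μ : ℝ}
    (hc : (R⁻¹ * Ah * R) *ᵥ c = μ • c) : Ah *ᵥ (R *ᵥ c) = μ • (R *ᵥ c) := by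
  have hdet := (isUnit_iff_isUnit_det R).1 hR
  simpa [mulVec_mulVec, ← Matrix.mul_assoc, mul_nonsing_inv R hdet, mulVec_smul] using
    congrArg (R *ᵥ ·) hc

end Conjugation

lemma exists_sign_norm_smul_sub_le {V : Type*} [NormedAddCommGroup V] [NormedSpace ℝ V]
    {x u : V} {c β : ℝ} (hx : ‖x‖ = 1) (hu : ‖u‖ = 1) (h : ‖x - c • u‖ ≤ β) :
    ∃ s : ℝ, (s = 1 ∨ s = -1) ∧ ‖s • x - u‖ ≤ 2 * β := by
  have hc : |(|c| - 1)| ≤ β := by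
    have := abs_norm_sub_norm_le (c • u) x
    rw [norm_smul, hu, mul_one, Real.norm_eq_abs, hx, norm_sub_rev] at this
    exact this.trans h
  obtain ⟨s, hs, hsc⟩ : ∃ s : ℝ, (s = 1 ∨ s = -1) ∧ s * c = |c| := by
    rcases le_total 0 c with h | h
    · exact ⟨1, Or.inl rfl, by rw [one_mul, abs_of_nonneg h]⟩
    · exact ⟨-1, Or.inr rfl, by rw [neg_one_mul, abs_of_nonpos h]⟩
  have hs_abs : |s| = 1 := by rcases hs with rfl | rfl <;> simp
  refine ⟨s, hs, ?_⟩
  have hdecomp : s • x - u = s • (x - c • u) + (|c| - 1) • u := by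
    rw [← hsc]
    module
  calc ‖s • x - u‖ ≤ ‖s • (x - c • u)‖ + ‖(|c| - 1) • u‖ := hdecomp ▸ norm_add_le _ _
    _ = ‖x - c • u‖ + |(|c| - 1)| := by
        rw [norm_smul, norm_smul, Real.norm_eq_abs, hs_abs, one_mul, hu, mul_one,
          Real.norm_eq_abs]
    _ ≤ 2 * β := by linarith

section Columns

variable {m n : ℕ} {R : Matrix (Fin m) (Fin n) ℝ}

lemma vnorm_mulVec_sub_smul_col_le (hcol : ∀ j, vnorm (fun a => R a j) = 1)
    (c : Fin n → ℝ) (i : Fin n) :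
    vnorm (R *ᵥ c - c i • fun a => R a i) ≤ ∑ j ∈ Finset.univ.erase i, |c j| := by
  have hsum : R *ᵥ c - c i • (fun a => R a i) =
      ∑ j ∈ Finset.univ.erase i, c j • fun a => R a j := by
    rw [sub_eq_iff_eq_add, Finset.sum_erase_add _ _ (Finset.mem_univ i)]
    ext a
    simp [mulVec, dotProduct, Finset.sum_apply, mul_comm]
  rw [hsum, vnorm_eq_norm, WithLp.toLp_sum]
  refine (norm_sum_le _ _).trans (Finset.sum_le_sum fun j _ => ?_)
  rw [WithLp.toLp_smul, norm_smul, ← vnorm_eq_norm, hcol, mul_one, Real.norm_eq_abs]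

lemma exists_sign_vnorm_smul_sub_col_le (hcol : ∀ j, vnorm (fun a => R a j) = 1)
    {c : Fin n → ℝ} (hRc : vnorm (R *ᵥ c) = 1) {i : Fin n} {β : ℝ}
    (hc : ∀ j ≠ i, |c j| ≤ β) :
    ∃ s : ℝ, (s = 1 ∨ s = -1) ∧
      vnorm (fun a => s * (R *ᵥ c) a - R a i) ≤ 2 * (((n : ℝ) - 1) * β) := by
  have hw : vnorm (R *ᵥ c - c i • fun a => R a i) ≤ ((n : ℝ) - 1) * β := by
    refine (vnorm_mulVec_sub_smul_col_le hcol c i).trans ?_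
    refine (Finset.sum_le_card_nsmul (Finset.univ.erase i) (fun j => |c j|) β
      fun j hj => hc j (Finset.ne_of_mem_erase hj)).trans_eq ?_
    rw [Finset.card_erase_of_mem (Finset.mem_univ i), Finset.card_univ, Fintype.card_fin,
      nsmul_eq_mul, Nat.cast_pred i.pos]
  have hu : ‖(WithLp.toLp 2 (fun a => R a i) : EuclideanSpace ℝ (Fin m))‖ = 1 := by
    rw [← vnorm_eq_norm, hcol i]
  rw [vnorm_eq_norm] at hRc hw
  obtain ⟨s, hs, hsx⟩ := exists_sign_norm_smul_sub_le hRc hu hw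
  exact ⟨s, hs, (vnorm_eq_norm _).trans_le hsx⟩

end Columns

lemma exists_unit_eigenvector_near_col {k : ℕ} {R Ah : Matrix (Fin k) (Fin k) ℝ}
    {lam : Fin k → ℝ} {d γ : ℝ} {i : Fin k} (hR : IsUnit R)
    (hcol : ∀ j, vnorm (fun a => R a j) = 1) (hd : 0 ≤ d) (hdγ : d < γ / 2)
    (hgap : ∀ j ≠ i, γ ≤ |lam j - lam i|)
    (hB : ∀ y, vnorm ((R⁻¹ * Ah * R - diagonal lam) *ᵥ y) ≤ d * vnorm y) :
    ∃ (μ : ℝ) (ξ : Fin k → ℝ) (s : ℝ), |μ - lam i| ≤ d ∧ vnorm ξ = 1 ∧ Ah *ᵥ ξ = μ • ξ ∧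
      (s = 1 ∨ s = -1) ∧
      vnorm (fun a => s * ξ a - R a i) ≤ 4 * ((k : ℝ) - 1) * sval R⁻¹ 1 * (d / γ) := by
  have hdet := (isUnit_iff_isUnit_det R).1 hR
  obtain ⟨μ, c₀, hc₀, hμ, heig₀⟩ := exists_eigenvector_near hd hdγ hgap hB
  have hRc₀ : 0 < vnorm (R *ᵥ c₀) := vnorm_pos fun h => hc₀ <| by
    simpa [mulVec_mulVec, nonsing_inv_mul R hdet] using congrArg (R⁻¹ *ᵥ ·) h
  set c := (vnorm (R *ᵥ c₀))⁻¹ • c₀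
  have heig : (R⁻¹ * Ah * R) *ᵥ c = μ • c := by rw [mulVec_smul, heig₀, smul_comm]
  have hRc : vnorm (R *ᵥ c) = 1 := by
    rw [mulVec_smul, vnorm_smul, abs_inv, abs_of_pos hRc₀, inv_mul_cancel₀ hRc₀.ne']
  have hc : vnorm c ≤ sval R⁻¹ 1 := by
    simpa [mulVec_mulVec, nonsing_inv_mul R hdet, hRc] using
      vnorm_mulVec_le_sval_one R⁻¹ (R *ᵥ c)
  have hγ : 0 < γ := by linarith
  have hcj : ∀ j ≠ i, |c j| ≤ 2 * (d / γ) * sval R⁻¹ 1 := fun j hj =>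
    (abs_apply_le_of_isolated hdγ hgap hB hμ heig hj).trans (by gcongr)
  obtain ⟨s, hs, hsξ⟩ := exists_sign_vnorm_smul_sub_col_le hcol hRc hcj
  exact ⟨μ, R *ᵥ c, s, hμ, hRc, mulVec_mulVec_eq_smul_of_conj hR heig, hs,
    hsξ.trans_eq (by ring)⟩

section Gap

variable {ι : Type*} {lam : ι → ℝ}

lemma sInf_abs_sub_le {i j : ι} (hij : i ≠ j) :
    sInf {r : ℝ | ∃ i j, i ≠ j ∧ r = |lam i - lam j|} ≤ |lam i - lam j| :=
  csInf_le ⟨0, by rintro _ ⟨_, _, _, rfl⟩; exact abs_nonneg _⟩ ⟨i, j, hij, rfl⟩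

lemma sInf_abs_sub_pos [Finite ι] [Nontrivial ι] (hlam : Function.Injective lam) :
    0 < sInf {r : ℝ | ∃ i j, i ≠ j ∧ r = |lam i - lam j|} := by
  have hfin : {r : ℝ | ∃ i j, i ≠ j ∧ r = |lam i - lam j|}.Finite :=
    (Set.finite_range fun p : ι × ι => |lam p.1 - lam p.2|).subset
      (by rintro _ ⟨i, j, _, rfl⟩; exact ⟨(i, j), rfl⟩)
  obtain ⟨i₀, j₀, hij₀⟩ := exists_pair_ne ι
  obtain ⟨i, j, hij, h⟩ := Set.Nonempty.csInf_mem
    (s := {r : ℝ | ∃ i j, i ≠ j ∧ r = |lam i - lam j|}) ⟨_, i₀, j₀, hij₀, rfl⟩ hfin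
  rw [h, abs_pos, sub_ne_zero]
  exact hlam.ne hij

lemma injective_of_abs_sub_le {μ : ι → ℝ} {γ d : ℝ}
    (hgap : ∀ i j, i ≠ j → γ ≤ |lam i - lam j|) (hμ : ∀ i, |μ i - lam i| ≤ d)
    (hdγ : d < γ / 2) : Function.Injective μ := by
  intro i j hij
  by_contra hne
  have hi : |lam i - μ i| ≤ d := abs_sub_comm (μ i) (lam i) ▸ hμ i
  have hj : |μ i - lam j| ≤ d := hij ▸ hμ j
  linarith [hgap i j hne, abs_sub_le (lam i) (μ i) (lam j)]

end Gap

/-- (Eigenvector perturbation.) In the setting of the eigenvalue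
perturbation lemma (`ε₃ < 1/2`), `Â` has unit-norm right eigenvectors
`ξ̂_1,…,ξ̂_k` (with distinct real eigenvalues `λ̂_i`, matched to the `λ_i` by the
permutation `τ`) satisfying, up to a choice of sign `s i ∈ {±1}` for each,
`‖s i • ξ̂_{τ(i)} − ξ_i‖₂ ≤ 4(k−1)‖R⁻¹‖₂ ε₃` where `ξ_i` is the `i`-th column of `R`. -/
theorem stmt_13 {k : ℕ} (hk : 1 < k)
    (A Ah R : Matrix (Fin k) (Fin k) ℝ) (lam : Fin k → ℝ)
    (hRunit : IsUnit R)
    (hRcol : ∀ j, vnorm (fun i => R i j) = 1)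
    (hA : A = R * Matrix.diagonal lam * R⁻¹)
    (hdist : Function.Injective lam)
    (γ ε3 : ℝ)
    (hγ : γ = sInf {r : ℝ | ∃ i j, i ≠ j ∧ r = |lam i - lam j|})
    (hε3 : ε3 = (sval R 1 / sval R k) * sval (Ah - A) 1 / γ)
    (hε3lt : ε3 < 1 / 2) :
    ∃ (xih : Fin k → (Fin k → ℝ)) (lamh : Fin k → ℝ) (τ : Equiv.Perm (Fin k))
      (s : Fin k → ℝ),
      Function.Injective lamh ∧
      (∀ i, vnorm (xih i) = 1) ∧
      (∀ i, Ah.mulVec (xih i) = lamh i • xih i) ∧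
      (∀ i, |lamh (τ i) - lam i| ≤ ε3 * γ) ∧
      (∀ i, s i = 1 ∨ s i = -1) ∧
      (∀ i, vnorm (fun a => s i * xih (τ i) a - R a i)
        ≤ 4 * ((k : ℝ) - 1) * sval R⁻¹ 1 * ε3) := by
  have : Nontrivial (Fin k) := Fin.nontrivial_iff_two_le.2 hk
  have hγ0 : 0 < γ := hγ ▸ sInf_abs_sub_pos hdist
  have hgap : ∀ i j, i ≠ j → γ ≤ |lam i - lam j| := fun i j hij => hγ ▸ sInf_abs_sub_le hij
  have hd : ε3 * γ = sval R⁻¹ 1 * sval (Ah - A) 1 * sval R 1 := by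
    rw [hε3, sval_inv_one_eq_inv_sval (by omega) hRunit]
    field_simp
  have hB : ∀ y, vnorm ((R⁻¹ * Ah * R - diagonal lam) *ᵥ y) ≤ ε3 * γ * vnorm y := fun y => by
    rw [inv_mul_mul_sub_diagonal_eq hRunit hA, hd]
    exact vnorm_mul_mul_mulVec_le _ _ _ y
  have hd0 : 0 ≤ ε3 * γ := by
    rw [hd]
    exact mul_nonneg (mul_nonneg (sval_nonneg _ _) (sval_nonneg _ _)) (sval_nonneg _ _)
  have hdγ : ε3 * γ < γ / 2 := by nlinarith
  choose μ ξ s hμ hξ heig hs hξR using fun i =>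
    exists_unit_eigenvector_near_col (i := i) hRunit hRcol hd0 hdγ (fun j hj => hgap j i hj) hB
  refine ⟨ξ, μ, Equiv.refl _, s, injective_of_abs_sub_le hgap hμ hdγ, hξ, heig, hμ, hs,
    fun i => ?_⟩
  simpa [mul_div_cancel_right₀ _ hγ0.ne'] using hξR i
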